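/- arXiv:1103.0853 — 6 statements merged into one kernel-verified Lean document; each statement's English description precedes it below -/
import Mathlib

section
/- If every Boolean operator in the set B corresponds to a 1-reproducing Boolean function (i.e., f(1,...,1)=1), then every ALC ontology (TBox plus ABox) built from operators in B and quantifiers ∃, ∀, together with any B-concept C, is satisfiable: there is an interpretation satisfying all axioms in which C has a nonempty extension. In particular, the one-element interpretation in which every atomic concept contains the unique individual and the unique role loop holds is a model. -/
namespace ALC

/-- A Boolean operator: an arity together with a Boolean function of that arity. -/
structure BoolOp where
  arity : ℕ
  fn : (Fin arity → Bool) → Bool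

/-- ALC concepts over atomic concepts `A` and roles `R`, with arbitrary Boolean operators. -/
inductive Concept (A R : Type) : Type
  | atom : A → Concept A R
  | op : (o : BoolOp) → (Fin o.arity → Concept A R) → Concept A R
  | ex : R → Concept A R → Concept A R
  | all : R → Concept A R → Concept A R

def topOp : BoolOp := ⟨0, fun _ => true⟩
def botOp : BoolOp := ⟨0, fun _ => false⟩
def negOp : BoolOp := ⟨1, fun v => !(v 0)⟩
def andOp : BoolOp := ⟨2, fun v => v 0 && v 1⟩
def orOp : BoolOp := ⟨2, fun v => v 0 || v 1⟩
def xorOp : BoolOp := ⟨2, fun v => xor (v 0) (v 1)⟩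

namespace Concept
variable {A R : Type}

def top : Concept A R := .op topOp Fin.elim0
def bot : Concept A R := .op botOp Fin.elim0
def neg (C : Concept A R) : Concept A R := .op negOp ![C]
def inf (C D : Concept A R) : Concept A R := .op andOp ![C, D]
def sup (C D : Concept A R) : Concept A R := .op orOp ![C, D]

/-- The atomic concept `a` occurs in the concept. -/
def atomOcc (a : A) : Concept A R → Prop
  | .atom b => b = a
  | .op _ cs => ∃ i, (cs i).atomOcc a
  | .ex _ c => c.atomOcc a
  | .all _ c => c.atomOcc a

/-- The role `r` occurs in the concept. -/
def roleOcc (r : R) : Concept A R → Prop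
  | .atom _ => False
  | .op _ cs => ∃ i, (cs i).roleOcc r
  | .ex s c => s = r ∨ c.roleOcc r
  | .all s c => s = r ∨ c.roleOcc r

/-- All Boolean operators of the concept belong to `B`. -/
def opsIn (B : Set BoolOp) : Concept A R → Prop
  | .atom _ => True
  | .op o cs => o ∈ B ∧ ∀ i, (cs i).opsIn B
  | .ex _ c => c.opsIn B
  | .all _ c => c.opsIn B

/-- No universal quantifier occurs. -/
def noAll : Concept A R → Prop
  | .atom _ => True
  | .op _ cs => ∀ i, (cs i).noAll
  | .ex _ c => c.noAll
  | .all _ _ => False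

/-- No existential quantifier occurs. -/
def noEx : Concept A R → Prop
  | .atom _ => True
  | .op _ cs => ∀ i, (cs i).noEx
  | .ex _ _ => False
  | .all _ c => c.noEx

end Concept

/-- An ALC interpretation. -/
structure Interp (A R Ind : Type) where
  Δ : Type
  nonempty : Nonempty Δ
  conc : A → Set Δ
  role : R → Δ → Δ → Prop
  ind : Ind → Δ

open Classical in
/-- The extension of a concept in an interpretation. -/
noncomputable def Interp.sem {A R Ind : Type} (I : Interp A R Ind) : Concept A R → Set I.Δ
  | .atom a => I.conc a
  | .op o cs => {x | o.fn (fun i => decide (x ∈ I.sem (cs i))) = true}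
  | .ex r c => {x | ∃ y, I.role r x y ∧ y ∈ I.sem c}
  | .all r c => {x | ∀ y, I.role r x y → y ∈ I.sem c}

/-- Satisfaction of a GCI `C ⊑ D`. -/
def Interp.satAx {A R Ind : Type} (I : Interp A R Ind) (ax : Concept A R × Concept A R) : Prop :=
  I.sem ax.1 ⊆ I.sem ax.2

/-- Satisfaction of a TBox. -/
def Interp.satT {A R Ind : Type} (I : Interp A R Ind) (T : Set (Concept A R × Concept A R)) : Prop :=
  ∀ ax ∈ T, I.satAx ax

/-- ABox assertions. -/
inductive Assertion (A R Ind : Type)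
  | conc : Concept A R → Ind → Assertion A R Ind
  | role : R → Ind → Ind → Assertion A R Ind

/-- Satisfaction of an ABox assertion. -/
noncomputable def Interp.satA {A R Ind : Type} (I : Interp A R Ind) : Assertion A R Ind → Prop
  | .conc C a => I.ind a ∈ I.sem C
  | .role r a b => I.role r (I.ind a) (I.ind b)

/-- Satisfaction of an ABox. -/
def Interp.satAB {A R Ind : Type} (I : Interp A R Ind) (Ab : Set (Assertion A R Ind)) : Prop :=
  ∀ x ∈ Ab, I.satA x


/-- The one-element interpretation in which every atomic concept contains the unique
individual and the unique role loop holds. -/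
def unitFull (A R Ind : Type) : Interp A R Ind :=
  ⟨Unit, ⟨()⟩, fun _ => Set.univ, fun _ _ _ => True, fun _ => ()⟩

lemma sem_unitFull {A R Ind : Type} (B : Set BoolOp)
    (hB : ∀ o ∈ B, o.fn (fun _ => true) = true)
    (C : Concept A R) (hC : C.opsIn B) :
    (unitFull A R Ind).sem C = Set.univ := by
  induction C with
  | atom a => rfl
  | op o cs ih =>
      ext x
      simp only [Interp.sem, Set.mem_setOf_eq, Set.mem_univ, iff_true]
      convert hB o hC.1 using 2
      funext i
      exact @decide_eq_true _ (Classical.propDecidable _) (by simp [ih i (hC.2 i)])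
  | ex r c ih =>
      ext x
      simp only [Interp.sem, Set.mem_setOf_eq, Set.mem_univ, iff_true]
      exact ⟨x, trivial, by simp [ih hC]⟩
  | all r c ih =>
      ext x
      simp only [Interp.sem, Set.mem_setOf_eq, Set.mem_univ, iff_true]
      intro y _
      simp [ih hC]

/-- If every operator of `B` is 1-reproducing, every ontology over `B` together with any
`B`-concept is satisfiable; in particular by the full one-element interpretation. -/
theorem stmt0 {A R Ind : Type} (B : Set BoolOp)
    (hB : ∀ o ∈ B, o.fn (fun _ => true) = true)
    (T : Set (Concept A R × Concept A R))
    (hT : ∀ ax ∈ T, ax.1.opsIn B ∧ ax.2.opsIn B)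
    (Ab : Set (Assertion A R Ind))
    (hAb : ∀ (D : Concept A R) (a : Ind), Assertion.conc D a ∈ Ab → D.opsIn B)
    (C : Concept A R) (hC : C.opsIn B) :
    ((unitFull A R Ind).satT T ∧ (unitFull A R Ind).satAB Ab ∧ (unitFull A R Ind).sem C ≠ ∅)
      ∧ ∃ I : Interp A R Ind, I.satT T ∧ I.satAB Ab ∧ I.sem C ≠ ∅ := by
  have main : (unitFull A R Ind).satT T ∧ (unitFull A R Ind).satAB Ab
      ∧ (unitFull A R Ind).sem C ≠ ∅ := by
    refine ⟨?_, ?_, ?_⟩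
    · intro ax hax
      unfold Interp.satAx
      rw [sem_unitFull B hB _ (hT ax hax).2]
      exact Set.subset_univ _
    · intro x hx
      cases x with
      | conc D a =>
          show (unitFull A R Ind).ind a ∈ (unitFull A R Ind).sem D
          rw [sem_unitFull B hB _ (hAb D a hx)]
          trivial
      | role r a b => exact trivial
    · rw [sem_unitFull B hB _ hC]
      exact fun h => ((Set.univ_eq_empty_iff.mp h).false ())
  exact ⟨main, ⟨unitFull A R Ind, main⟩⟩

end ALC
end

section
/- (Correctness of normalization rule NF7) Let A, B, C be atomic concepts, R_A a fresh role and A' a fresh atomic concept. Then: (1) every interpretation I satisfying A ⊓ B ⊑ C can be extended (by interpreting R_A and A' appropriately, without changing Δ^I or the interpretation of old symbols) to an interpretation satisfying all of A ⊑ ∃R_A.⊤, B ⊑ ∀R_A.A', and ∃R_A.A' ⊑ C; and (2) every interpretation satisfying those three axioms also satisfies A ⊓ B ⊑ C. -/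
namespace ALC

namespace Interp

variable {A R Ind : Type} (I : Interp A R Ind) {x : I.Δ}

@[simp] lemma mem_sem_atom {a : A} : x ∈ I.sem (.atom a) ↔ x ∈ I.conc a := Iff.rfl

@[simp] lemma mem_sem_ex {r : R} {C : Concept A R} :
    x ∈ I.sem (.ex r C) ↔ ∃ y, I.role r x y ∧ y ∈ I.sem C := Iff.rfl

@[simp] lemma mem_sem_all {r : R} {C : Concept A R} :
    x ∈ I.sem (.all r C) ↔ ∀ y, I.role r x y → y ∈ I.sem C := Iff.rfl

@[simp] lemma mem_sem_top : x ∈ I.sem (Concept.top : Concept A R) := by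
  simp [Concept.top, sem, topOp]

@[simp] lemma mem_sem_inf {C D : Concept A R} :
    x ∈ I.sem (C.inf D) ↔ x ∈ I.sem C ∧ x ∈ I.sem D := by
  simp only [Concept.inf, sem, andOp, Set.mem_ofPred_eq, Matrix.cons_val_zero,
    Matrix.cons_val_one, Bool.and_eq_true]
  classical exact and_congr decide_eq_true_iff decide_eq_true_iff

theorem satAx_inf_of_satAx_ex_all {C D E F : Concept A R} {r : R}
    (hC : I.satAx (C, .ex r .top)) (hD : I.satAx (D, .all r F)) (hE : I.satAx (.ex r F, E)) : I.satAx (C.inf D, E) := by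
  intro x hx
  rw [mem_sem_inf] at hx
  obtain ⟨y, hxy, -⟩ := hC hx.1
  exact hE ⟨y, hxy, hD hx.2 y hxy⟩

variable [DecidableEq A] [DecidableEq R]

def update (a : A) (s : Set I.Δ) (r : R) (ρ : I.Δ → I.Δ → Prop) : Interp A R Ind :=
  { I with conc := Function.update I.conc a s, role := Function.update I.role r ρ }

variable {I} {a b : A} {s : Set I.Δ} {r : R} {ρ : I.Δ → I.Δ → Prop}

@[simp] lemma update_conc_self : (I.update a s r ρ).conc a = s := Function.update_self ..

lemma update_conc_of_ne (h : b ≠ a) : (I.update a s r ρ).conc b = I.conc b :=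
  Function.update_of_ne h ..

@[simp] lemma update_role_self : (I.update a s r ρ).role r = ρ := Function.update_self ..

theorem exists_update_satAx_ex_all_of_satAx_inf {a b c a' : A} (r : R)
    (ha : a' ≠ a) (hb : a' ≠ b) (hc : a' ≠ c)
    (hI : I.satAx ((Concept.atom a).inf (Concept.atom b), Concept.atom c)) :
    ∃ (ρ : I.Δ → I.Δ → Prop) (s : Set I.Δ),
      (I.update a' s r ρ).satAx (Concept.atom a, Concept.ex r Concept.top) ∧
      (I.update a' s r ρ).satAx (Concept.atom b, Concept.all r (Concept.atom a')) ∧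
      (I.update a' s r ρ).satAx (Concept.ex r (Concept.atom a'), Concept.atom c) := by
  refine ⟨fun x y => x = y ∧ x ∈ I.conc a, I.conc b, ?_, ?_, ?_⟩ <;> intro x hx <;>
    simp only [mem_sem_atom, mem_sem_ex, mem_sem_all, mem_sem_top, update_conc_self,
      update_role_self, update_conc_of_ne ha.symm, update_conc_of_ne hb.symm,
      update_conc_of_ne hc.symm] at hx ⊢
  · exact ⟨x, ⟨rfl, hx⟩, trivial⟩
  · rintro _ ⟨rfl, -⟩
    exact hx
  · obtain ⟨_, ⟨rfl, hxa⟩, hxb⟩ := hx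
    exact hI (I.mem_sem_inf.2 ⟨hxa, hxb⟩)

end Interp

/-- Correctness of normalization rule NF7. -/
theorem stmt7 {A R Ind : Type} [DecidableEq A] [DecidableEq R]
    (a b c a' : A) (rA : R) (h1 : a' ≠ a) (h2 : a' ≠ b) (h3 : a' ≠ c) :
    (∀ I : Interp A R Ind,
      I.satAx ((Concept.atom a).inf (Concept.atom b), Concept.atom c) →
      ∃ (ra : I.Δ → I.Δ → Prop) (s : Set I.Δ),
        (let J : Interp A R Ind :=
          { Δ := I.Δ, nonempty := I.nonempty,
            conc := Function.update I.conc a' s,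
            role := Function.update I.role rA ra,
            ind := I.ind }
        J.satAx (Concept.atom a, Concept.ex rA Concept.top) ∧
        J.satAx (Concept.atom b, Concept.all rA (Concept.atom a')) ∧
        J.satAx (Concept.ex rA (Concept.atom a'), Concept.atom c)))
    ∧
    (∀ J : Interp A R Ind,
        J.satAx (Concept.atom a, Concept.ex rA Concept.top) →
        J.satAx (Concept.atom b, Concept.all rA (Concept.atom a')) →
        J.satAx (Concept.ex rA (Concept.atom a'), Concept.atom c) →
        J.satAx ((Concept.atom a).inf (Concept.atom b), Concept.atom c)) :=
  ⟨fun I hI => I.exists_update_satAx_ex_all_of_satAx_inf rA h1 h2 h3 hI,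
    fun J => J.satAx_inf_of_satAx_ex_all⟩

end ALC
end

section
/- (Simulating atomic negation with quantifiers and constants) Let A and A' be atomic concepts and R_A a role. Every interpretation satisfying the two axioms A ≡ ∃R_A.⊤ and A' ≡ ∀R_A.⊥ interprets A' as the complement of A, i.e., A'^I = Δ^I \ A^I. Conversely, every interpretation of A can be extended by interpretations of R_A and A' satisfying both axioms. -/
namespace ALC

/-- Simulating atomic negation with quantifiers and constants: the axioms
`A ≡ ∃R_A.⊤` and `A' ≡ ∀R_A.⊥` force `A'` to be the complement of `A`, and every
interpretation of `A` can be extended so that both axioms hold. -/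
theorem stmt8 {A R Ind : Type} [DecidableEq A] [DecidableEq R]
    (a a' : A) (rA : R) (h : a' ≠ a) :
    (∀ I : Interp A R Ind,
        I.satAx (Concept.atom a, Concept.ex rA Concept.top) →
        I.satAx (Concept.ex rA Concept.top, Concept.atom a) →
        I.satAx (Concept.atom a', Concept.all rA Concept.bot) →
        I.satAx (Concept.all rA Concept.bot, Concept.atom a') →
        I.conc a' = (I.conc a)ᶜ)
    ∧
    (∀ I : Interp A R Ind, ∃ (ra : I.Δ → I.Δ → Prop) (s : Set I.Δ),
        (let J : Interp A R Ind :=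
          { Δ := I.Δ, nonempty := I.nonempty,
            conc := Function.update I.conc a' s,
            role := Function.update I.role rA ra,
            ind := I.ind }
        J.satAx (Concept.atom a, Concept.ex rA Concept.top) ∧
        J.satAx (Concept.ex rA Concept.top, Concept.atom a) ∧
        J.satAx (Concept.atom a', Concept.all rA Concept.bot) ∧
        J.satAx (Concept.all rA Concept.bot, Concept.atom a'))) := by
  constructor
  · intro I h1 h2 h3 h4
    have hbot : I.sem Concept.bot = (∅ : Set I.Δ) := by
      ext x; simp [Interp.sem, Concept.bot, botOp]
    ext x
    simp only [Set.mem_compl_iff]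
    constructor
    · intro hx hxa
      obtain ⟨y, hy, _⟩ := h1 hxa
      have := h3 hx y hy
      rw [hbot] at this
      exact this
    · intro hx
      refine h4 ?_
      intro y hy
      exact absurd (h2 ⟨y, hy, by simp [Interp.sem, Concept.top, topOp]⟩) hx
  · intro I
    refine ⟨fun x _ => x ∈ I.conc a, (I.conc a)ᶜ, ?_, ?_, ?_, ?_⟩
    · intro x hx
      obtain ⟨y⟩ := I.nonempty
      refine ⟨y, ?_, by simp [Interp.sem, Concept.top, topOp]⟩
      simp only [Function.update_self]
      simpa [Interp.sem, Function.update_of_ne h.symm] using hx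
    · rintro x ⟨y, hy, -⟩
      simp only [Function.update_self] at hy
      simpa [Interp.sem, Function.update_of_ne h.symm] using hy
    · intro x hx y hy
      simp only [Function.update_self] at hy
      have : x ∈ (I.conc a)ᶜ := by
        simpa [Interp.sem, Function.update_self] using hx
      exact absurd hy this
    · intro x hx
      simp only [Interp.sem, Function.update_self, Set.mem_compl_iff]
      intro hxa
      obtain ⟨y⟩ := I.nonempty
      have := hx y (by simp only [Function.update_self]; exact hxa)
      simp [Interp.sem, Concept.bot, botOp] at this

end ALC
end

section
/- (Reduction of subsumption to TBox unsatisfiability) Let T be a TBox and A, B atomic concepts, R and R_B fresh roles, B' a fresh atomic concept. Define T' = T ∪ {⊤ ⊑ ∃R.(A ⊓ B'), B' ≡ ∃R_B.⊤, B ≡ ∀R_B.⊥}. Then T ⊨ A ⊑ B (i.e., every model of T satisfies A ⊑ B) if and only if T' is unsatisfiable. -/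
namespace ALC

lemma sem_ext {A R Ind : Type} (I : Interp A R Ind) (conc' : A → Set I.Δ)
    (role' : R → I.Δ → I.Δ → Prop) (ind' : Ind → I.Δ) (C : Concept A R)
    (hc : ∀ x, C.atomOcc x → conc' x = I.conc x)
    (hr : ∀ s, C.roleOcc s → role' s = I.role s) :
    (Interp.mk I.Δ I.nonempty conc' role' ind').sem C = I.sem C := by
  classical
  induction C with
  | atom x => exact hc x rfl
  | op o cs ih =>
    have h : ∀ i, (Interp.mk I.Δ I.nonempty conc' role' ind').sem (cs i) = I.sem (cs i) :=
      fun i => ih i (fun x hx => hc x ⟨i, hx⟩) (fun s hs => hr s ⟨i, hs⟩)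
    ext x
    simp only [Interp.sem, Set.mem_setOf_eq]
    have : (fun i => decide (x ∈ (Interp.mk I.Δ I.nonempty conc' role' ind').sem (cs i)))
        = fun i => decide (x ∈ I.sem (cs i)) :=
      funext fun i => decide_eq_decide.mpr (by rw [h i])
    rw [this]
  | ex s c ih =>
    have hc' := ih (fun x hx => hc x hx) (fun t ht => hr t (Or.inr ht))
    have hs : (Interp.mk I.Δ I.nonempty conc' role' ind').role s = I.role s := hr s (Or.inl rfl)
    ext x
    simp only [Interp.sem, Set.mem_setOf_eq, hc']
    rw [show role' s = I.role s from hs]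
  | all s c ih =>
    have hc' := ih (fun x hx => hc x hx) (fun t ht => hr t (Or.inr ht))
    have hs : (Interp.mk I.Δ I.nonempty conc' role' ind').role s = I.role s := hr s (Or.inl rfl)
    ext x
    simp only [Interp.sem, Set.mem_setOf_eq, hc']
    rw [show role' s = I.role s from hs]

/-- Reduction of subsumption to TBox unsatisfiability:
`T ⊨ A ⊑ B` iff `T ∪ {⊤ ⊑ ∃R.(A ⊓ B'), B' ≡ ∃R_B.⊤, B ≡ ∀R_B.⊥}` is unsatisfiable. -/
theorem stmt9 {A R Ind : Type} (T : Set (Concept A R × Concept A R)) (a b b' : A) (r rb : R)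
    (hfresh : ∀ ax ∈ T,
      (¬ ax.1.atomOcc b' ∧ ¬ ax.2.atomOcc b') ∧
      (¬ ax.1.roleOcc r ∧ ¬ ax.2.roleOcc r) ∧
      (¬ ax.1.roleOcc rb ∧ ¬ ax.2.roleOcc rb))
    (hb'a : b' ≠ a) (hb'b : b' ≠ b) (hr : r ≠ rb) :
    (∀ I : Interp A R Ind, I.satT T → I.conc a ⊆ I.conc b) ↔
      ¬ ∃ I : Interp A R Ind, I.satT (T ∪
        {(Concept.top, Concept.ex r ((Concept.atom a).inf (Concept.atom b'))),
         (Concept.atom b', Concept.ex rb Concept.top),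
         (Concept.ex rb Concept.top, Concept.atom b'),
         (Concept.atom b, Concept.all rb Concept.bot),
         (Concept.all rb Concept.bot, Concept.atom b)}) := by
  classical
  have semtop : ∀ (J : Interp A R Ind) (x : J.Δ), x ∈ J.sem Concept.top := by
    intro J x
    simp [Interp.sem, Concept.top, topOp]
  have sembot : ∀ (J : Interp A R Ind) (x : J.Δ), x ∉ J.sem Concept.bot := by
    intro J x
    simp [Interp.sem, Concept.bot, botOp]
  constructor
  · rintro h ⟨I, hI⟩
    have hT : I.satT T := fun ax hax => hI ax (Or.inl hax)
    have hsub := h I hT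
    have h1 := hI (Concept.top, Concept.ex r ((Concept.atom a).inf (Concept.atom b')))
      (Or.inr (by simp))
    have h2 := hI (Concept.atom b', Concept.ex rb Concept.top) (Or.inr (by simp))
    have h4 := hI (Concept.atom b, Concept.all rb Concept.bot) (Or.inr (by simp))
    obtain ⟨x0⟩ := I.nonempty
    obtain ⟨y, hry, hy⟩ := h1 (semtop I x0)
    have hy' : y ∈ I.conc a ∧ y ∈ I.conc b' := by
      have := hy
      simp only [Interp.sem, Concept.inf, andOp, Set.mem_setOf_eq, Matrix.cons_val_zero,
        Matrix.cons_val_one, Matrix.head_cons, Bool.and_eq_true, decide_eq_true_eq] at this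
      exact this
    have hyb : y ∈ I.conc b := hsub hy'.1
    obtain ⟨z, hz, -⟩ := h2 hy'.2
    exact sembot I z (h4 hyb z hz)
  · intro h I hIT
    intro x0 hx0a
    by_contra hx0b
    apply h
    set conc' : A → Set I.Δ := fun c => if c = b' then (I.conc b)ᶜ else I.conc c with hconc'
    set role' : R → I.Δ → I.Δ → Prop := fun s => if s = r then (fun _ y => y = x0) else
        if s = rb then (fun x _ => x ∉ I.conc b) else I.role s with hrole'
    set J : Interp A R Ind := Interp.mk I.Δ I.nonempty conc' role' I.ind with hJ
    refine ⟨J, ?_⟩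
    have hra : conc' a = I.conc a := by
      simp only [hconc']; rw [if_neg (Ne.symm hb'a)]
    have hrbb : conc' b = I.conc b := by
      simp only [hconc']; rw [if_neg (Ne.symm hb'b)]
    have hrb' : conc' b' = (I.conc b)ᶜ := by
      simp [hconc']
    have hroler : role' r = fun _ y => y = x0 := by
      simp [hrole']
    have hrolerb : role' rb = fun x _ => x ∉ I.conc b := by
      simp [hrole', Ne.symm hr]
    intro ax hax
    rcases hax with hax | hax
    · obtain ⟨⟨hb1, hb2⟩, ⟨hr1, hr2⟩, ⟨hrb1, hrb2⟩⟩ := hfresh ax hax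
      have key : ∀ C : Concept A R, ¬ C.atomOcc b' → ¬ C.roleOcc r → ¬ C.roleOcc rb →
          J.sem C = I.sem C := by
        intro C hC1 hC2 hC3
        refine sem_ext I conc' role' I.ind C ?_ ?_
        · intro x hx
          simp only [hconc']
          rw [if_neg (fun hh : x = b' => hC1 (hh ▸ hx))]
        · intro s hs
          simp only [hrole']
          rw [if_neg (fun hh : s = r => hC2 (hh ▸ hs)),
            if_neg (fun hh : s = rb => hC3 (hh ▸ hs))]
      show J.sem ax.1 ⊆ J.sem ax.2
      rw [key ax.1 hb1 hr1 hrb1, key ax.2 hb2 hr2 hrb2]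
      exact hIT ax hax
    · simp only [Set.mem_insert_iff, Set.mem_singleton_iff] at hax
      have hJconc : J.conc = conc' := rfl
      have hJrole : J.role = role' := rfl
      rcases hax with hax | hax | hax | hax | hax <;> subst hax
      · -- top ⊑ ∃r.(a ⊓ b')
        intro x _
        refine ⟨x0, ?_, ?_⟩
        · show J.role r x x0
          rw [hJrole, hroler]
        · simp only [Interp.sem, Concept.inf, andOp, Set.mem_setOf_eq, Matrix.cons_val_zero,
            Matrix.cons_val_one, Matrix.head_cons, Bool.and_eq_true, decide_eq_true_eq]
          constructor
          · show x0 ∈ conc' a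
            rw [hra]; exact hx0a
          · show x0 ∈ conc' b'
            rw [hrb']; exact hx0b
      · -- b' ⊑ ∃rb.⊤
        intro x hx
        have hx' : x ∉ I.conc b := by
          have hx2 : x ∈ conc' b' := hx
          rwa [hrb'] at hx2
        refine ⟨x0, ?_, semtop J x0⟩
        show J.role rb x x0
        rw [hJrole, hrolerb]
        exact hx'
      · -- ∃rb.⊤ ⊑ b'
        rintro x ⟨y, hxy, -⟩
        have hx' : x ∉ I.conc b := by
          have hx2 : role' rb x y := hxy
          rwa [hrolerb] at hx2
        show x ∈ conc' b'
        rw [hrb']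
        exact hx'
      · -- b ⊑ ∀rb.⊥
        intro x hx y hxy
        have hxb : x ∈ I.conc b := by
          have hx2 : x ∈ conc' b := hx
          rwa [hrbb] at hx2
        have hx' : x ∉ I.conc b := by
          have hx2 : role' rb x y := hxy
          rwa [hrolerb] at hx2
        exact absurd hxb hx'
      · -- ∀rb.⊥ ⊑ b
        intro x hx
        show x ∈ conc' b
        rw [hrbb]
        by_contra hxb
        have hxy : J.role rb x x0 := by
          rw [hJrole, hrolerb]
          exact hxb
        exact sembot J x0 (hx x0 hxy)

end ALC
end

section
/- (Quantifier-free ontology satisfiability reduces to propositional satisfiability) Let (T, A) be an ontology and C a concept, all built only from atomic concepts, negation, conjunction, ⊤ and ⊥ (no quantifiers). Let a_1,...,a_m be the individuals in A and introduce propositional variables p^i_A for i = 0,...,m and each atomic concept A. Define translations f^i homomorphically (f^i(A) = p^i_A, f^i(⊤) = 1, f^i(⊥) = 0, f^i(¬D) = ¬f^i(D), f^i(D₁ ⊓ D₂) = f^i(D₁) ∧ f^i(D₂)) and set φ = ⋀_{i=0}^{m} ⋀_{(D⊑E)∈T} (f^i(D) → f^i(E)) ∧ ⋀_{i=1}^{m}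 ⋀_{D(a_i)∈A} f^i(D) ∧ f^0(C). Then there exists an interpretation I with I ⊨ T, I ⊨ A, and C^I ≠ ∅ if and only if φ is satisfiable as a propositional formula. -/
namespace ALC

/-- Quantifier-free concept all of whose operators belong to `Ops`. -/
def Concept.isProp {A R : Type} (Ops : Set BoolOp) : Concept A R → Prop
  | .atom _ => True
  | .op o cs => o ∈ Ops ∧ ∀ i, (cs i).isProp Ops
  | .ex _ _ => False
  | .all _ _ => False

/-- Propositional (Boolean) evaluation of a quantifier-free concept. -/
def Concept.pEval {A R : Type} (β : A → Bool) : Concept A R → Bool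
  | .atom a => β a
  | .op o cs => o.fn (fun i => (cs i).pEval β)
  | .ex _ _ => false
  | .all _ _ => false


lemma pEval_sem {A R Ind : Type} (I : Interp A R Ind) (Ops : Set BoolOp)
    (C : Concept A R) (h : C.isProp Ops) (x : I.Δ) (β : A → Bool)
    (hβ : ∀ a, β a = true ↔ x ∈ I.conc a) :
    C.pEval β = true ↔ x ∈ I.sem C := by
  classical
  induction C with
  | atom a => simpa [Concept.pEval, Interp.sem] using hβ a
  | op o cs ih =>
    simp only [Concept.pEval, Interp.sem, Set.mem_setOf_eq]
    have key : (fun i => (cs i).pEval β) = fun i => decide (x ∈ I.sem (cs i)) := by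
      funext i
      rw [Bool.eq_iff_iff]
      simp only [decide_eq_true_eq]
      exact ih i (h.2 i)
    rw [key]
  | ex r c ih => exact absurd h id
  | all r c ih => exact absurd h id

/-- Quantifier-free ontology satisfiability reduces to propositional satisfiability. -/
theorem stmt13 {A R Ind : Type} (T : Set (Concept A R × Concept A R))
    (Ab : Set (Assertion A R Ind)) (C : Concept A R)
    (hT : ∀ ax ∈ T, ax.1.isProp {negOp, andOp, topOp, botOp} ∧
                    ax.2.isProp {negOp, andOp, topOp, botOp})
    (hAb : ∀ (D : Concept A R) (a : Ind),
        Assertion.conc D a ∈ Ab → D.isProp {negOp, andOp, topOp, botOp})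
    (hC : C.isProp {negOp, andOp, topOp, botOp}) :
    (∃ I : Interp A R Ind, I.satT T ∧ I.satAB Ab ∧ I.sem C ≠ ∅) ↔
      (∃ β : Option Ind → A → Bool,
        (∀ i : Option Ind, ∀ ax ∈ T,
            ax.1.pEval (β i) = true → ax.2.pEval (β i) = true) ∧
        (∀ (D : Concept A R) (a : Ind),
            Assertion.conc D a ∈ Ab → D.pEval (β (some a)) = true) ∧
        C.pEval (β none) = true) := by
  classical
  constructor
  · rintro ⟨I, hIT, hIA, hIC⟩
    obtain ⟨x0, hx0⟩ := Set.nonempty_iff_ne_empty.mpr hIC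
    refine ⟨fun i => match i with
      | none => fun a => decide (x0 ∈ I.conc a)
      | some b => fun a => decide (I.ind b ∈ I.conc a), ?_, ?_, ?_⟩
    · intro i ax hax h1
      match i with
      | none =>
        exact (pEval_sem I _ ax.2 (hT ax hax).2 x0 _ (fun a => decide_eq_true_iff)).mpr
          (hIT ax hax ((pEval_sem I _ ax.1 (hT ax hax).1 x0 _ (fun a => decide_eq_true_iff)).mp h1))
      | some b =>
        exact (pEval_sem I _ ax.2 (hT ax hax).2 (I.ind b) _ (fun a => decide_eq_true_iff)).mpr
          (hIT ax hax ((pEval_sem I _ ax.1 (hT ax hax).1 (I.ind b) _ (fun a => decide_eq_true_iff)).mp h1))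
    · intro D a hDa
      exact (pEval_sem I _ D (hAb D a hDa) (I.ind a) _ (fun a => decide_eq_true_iff)).mpr (hIA _ hDa)
    · exact (pEval_sem I _ C hC x0 _ (fun a => decide_eq_true_iff)).mpr hx0
  · rintro ⟨β, hβT, hβA, hβC⟩
    let J : Interp A R Ind := ⟨Option Ind, ⟨none⟩, fun a => {i | β i a = true},
      fun _ _ _ => True, some⟩
    have hJ : ∀ (x : Option Ind) (a : A), β x a = true ↔ x ∈ J.conc a :=
      fun x a => Iff.rfl
    refine ⟨J, ?_, ?_, ?_⟩
    · intro ax hax x hx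
      exact (pEval_sem J _ ax.2 (hT ax hax).2 x (β x) (hJ x)).mp
        (hβT x ax hax ((pEval_sem J _ ax.1 (hT ax hax).1 x (β x) (hJ x)).mpr hx))
    · intro asn hasn
      cases asn with
      | conc D a =>
        exact (pEval_sem J _ D (hAb D a hasn) (some a) (β (some a)) (hJ (some a))).mp (hβA D a hasn)
      | role r a b => trivial
    · exact Set.nonempty_iff_ne_empty.mp
        ⟨none, (pEval_sem J _ C hC none (β none) (hJ none)).mp hβC⟩
end ALC
end

section
/- (Per-individual decomposition of quantifier-free ontology satisfiability) Let (T, A) be an ontology and C a concept over operators ¬ and constants only (no quantifiers, no binary operators). For each individual a occurring in A, let T^a = T ∪ {⊤ ⊑ D : D(a) ∈ A}. Then (T, A) has a model in which C is nonempty if and only if (i) for every individual a in A the TBox T^a is satisfiable, and (ii) there is a model of T in which C is nonempty. -/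
namespace ALC

/-- The individual `a` is mentioned in the assertion. -/
def Assertion.mentions {A R Ind : Type} (a : Ind) : Assertion A R Ind → Prop
  | .conc _ b => b = a
  | .role _ b c => b = a ∨ c = a

/-!
A quantifier-free concept only sees the atomic concepts a point belongs to, so membership in it is
the propositional evaluation of that concept under the point's valuation of the atoms. A model of
`(T, A)` therefore amounts to valuations satisfying `T` propositionally: one at each individual,
making its ABox concepts true (this is `T^a`), and one making `C` true. Conversely such valuations
are assembled into a model whose domain has one point per individual plus one witness for `C`.
-/

section
variable {A R Ind : Type} {Ops : Set BoolOp}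

def isPropT (Ops : Set BoolOp) (T : Set (Concept A R × Concept A R)) : Prop :=
  ∀ ax ∈ T, ax.1.isProp Ops ∧ ax.2.isProp Ops

def pSatT (β : A → Bool) (T : Set (Concept A R × Concept A R)) : Prop :=
  ∀ ax ∈ T, ax.1.pEval β = true → ax.2.pEval β = true

open Classical in
noncomputable def Interp.valAt (I : Interp A R Ind) (x : I.Δ) : A → Bool :=
  fun a => decide (x ∈ I.conc a)

open Classical in
theorem Concept.isProp.mem_sem_iff {c : Concept A R} (hc : c.isProp Ops) (I : Interp A R Ind)
    (x : I.Δ) : x ∈ I.sem c ↔ c.pEval (I.valAt x) = true := by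
  induction c with
  | atom a => simp [Interp.sem, Concept.pEval, Interp.valAt]
  | op o cs ih =>
    have hargs : (fun i => decide (x ∈ I.sem (cs i))) = fun i => (cs i).pEval (I.valAt x) :=
      funext fun i => by rw [Bool.eq_iff_iff, decide_eq_true_iff]; exact ih i (hc.2 i)
    simp only [Interp.sem, Concept.pEval, Set.mem_ofPred_eq, hargs]
  | ex => exact hc.elim
  | all => exact hc.elim

theorem Interp.satT_iff_forall_pSatT {T : Set (Concept A R × Concept A R)} (hT : isPropT Ops T)
    (I : Interp A R Ind) : I.satT T ↔ ∀ x, pSatT (I.valAt x) T := by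
  refine ⟨fun hI x ax hax h1 => ?_, fun hI ax hax x hx => ?_⟩
  · exact ((hT ax hax).2.mem_sem_iff I x).1 (hI ax hax (((hT ax hax).1.mem_sem_iff I x).2 h1))
  · exact ((hT ax hax).2.mem_sem_iff I x).2 (hI x ax hax (((hT ax hax).1.mem_sem_iff I x).1 hx))

theorem Interp.pEval_valAt_of_satAB {Ab : Set (Assertion A R Ind)} {I : Interp A R Ind}
    (hI : I.satAB Ab) {D : Concept A R} {a : Ind} (hDa : Assertion.conc D a ∈ Ab)
    (hD : D.isProp Ops) : D.pEval (I.valAt (I.ind a)) = true :=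
  (hD.mem_sem_iff I _).1 (hI _ hDa)

/-- Every role relates all pairs, so that role assertions hold; quantifier-free concepts do not
see roles. -/
abbrev Interp.ofValuation {Δ : Type} [h : Nonempty Δ] (f : Δ → A → Bool) (ind : Ind → Δ) :
    Interp A R Ind :=
  ⟨Δ, h, fun a => {x | f x a = true}, fun _ _ _ => True, ind⟩

theorem Interp.valAt_ofValuation {Δ : Type} [Nonempty Δ] (f : Δ → A → Bool)
    (ind : Ind → Δ) (x : Δ) : (Interp.ofValuation (R := R) f ind).valAt x = f x := by
  funext a
  simp [Interp.valAt]

theorem Interp.mem_sem_ofValuation_iff {Δ : Type} [Nonempty Δ] {c : Concept A R}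
    (hc : c.isProp Ops) (f : Δ → A → Bool) (ind : Ind → Δ) (x : Δ) :
    x ∈ (Interp.ofValuation f ind).sem c ↔ c.pEval (f x) = true := by
  rw [hc.mem_sem_iff, valAt_ofValuation]

theorem Interp.satT_ofValuation_iff {Δ : Type} [Nonempty Δ] {T : Set (Concept A R × Concept A R)}
    (hT : isPropT Ops T) (f : Δ → A → Bool) (ind : Ind → Δ) :
    (Interp.ofValuation f ind).satT T ↔ ∀ x, pSatT (f x) T := by
  rw [satT_iff_forall_pSatT hT]
  exact forall_congr' fun x => by rw [valAt_ofValuation]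

theorem pSatT_union_iff {β : A → Bool} {T T' : Set (Concept A R × Concept A R)} :
    pSatT β (T ∪ T') ↔ pSatT β T ∧ pSatT β T' := by
  simp only [pSatT, Set.mem_union, or_imp, forall_and]

theorem pSatT_top_iff {β : A → Bool} {P : Concept A R → Prop} :
    pSatT β {ax | ∃ D, P D ∧ ax = (Concept.top, D)} ↔ ∀ D, P D → D.pEval β = true := by
  refine ⟨fun h D hD => h _ ⟨D, hD, rfl⟩ rfl, ?_⟩
  rintro h _ ⟨D, hD, rfl⟩ -
  exact h D hD

theorem isPropT_union_top {T : Set (Concept A R × Concept A R)} {P : Concept A R → Prop}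
    (hT : isPropT Ops T) (htop : topOp ∈ Ops) (hP : ∀ D, P D → D.isProp Ops) :
    isPropT Ops (T ∪ {ax | ∃ D, P D ∧ ax = (Concept.top, D)}) := by
  rintro ax (hax | ⟨D, hD, rfl⟩)
  · exact hT ax hax
  · exact ⟨⟨htop, nofun⟩, hP D hD⟩

theorem exists_satT_iff_exists_pSatT {T : Set (Concept A R × Concept A R)} (hT : isPropT Ops T) :
    (∃ I : Interp A R Ind, I.satT T) ↔ ∃ β : A → Bool, pSatT β T := by
  constructor
  · rintro ⟨I, hI⟩
    obtain ⟨x⟩ := I.nonempty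
    exact ⟨I.valAt x, (I.satT_iff_forall_pSatT hT).1 hI x⟩
  · rintro ⟨β, hβ⟩
    exact ⟨Interp.ofValuation (fun _ : Unit => β) fun _ => (),
      (Interp.satT_ofValuation_iff hT _ _).2 fun _ => hβ⟩

theorem exists_satT_and_sem_ne_empty_iff {T : Set (Concept A R × Concept A R)} {C : Concept A R}
    (hT : isPropT Ops T) (hC : C.isProp Ops) :
    (∃ I : Interp A R Ind, I.satT T ∧ I.sem C ≠ ∅) ↔
      ∃ β : A → Bool, pSatT β T ∧ C.pEval β = true := by
  constructor
  · rintro ⟨I, hI, hIC⟩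
    obtain ⟨x, hx⟩ := Set.nonempty_iff_ne_empty.2 hIC
    exact ⟨I.valAt x, (I.satT_iff_forall_pSatT hT).1 hI x, (hC.mem_sem_iff I x).1 hx⟩
  · rintro ⟨β, hβ, hβC⟩
    exact ⟨Interp.ofValuation (fun _ : Unit => β) fun _ => (),
      (Interp.satT_ofValuation_iff hT _ _).2 fun _ => hβ,
      Set.nonempty_iff_ne_empty.1 ⟨(), (Interp.mem_sem_ofValuation_iff hC _ _ _).2 hβC⟩⟩

theorem exists_model_of_pSatT {T : Set (Concept A R × Concept A R)} {Ab : Set (Assertion A R Ind)}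
    {C : Concept A R} (hT : isPropT Ops T)
    (hAb : ∀ D a, Assertion.conc D a ∈ Ab → D.isProp Ops) (hC : C.isProp Ops)
    {β₀ : A → Bool} (h₀T : pSatT β₀ T) (h₀C : C.pEval β₀ = true)
    {β : Ind → A → Bool} (hβT : ∀ a, pSatT (β a) T)
    (hβAb : ∀ D a, Assertion.conc D a ∈ Ab → D.pEval (β a) = true) :
    ∃ I : Interp A R Ind, I.satT T ∧ I.satAB Ab ∧ I.sem C ≠ ∅ := by
  refine ⟨Interp.ofValuation (fun x => x.elim β₀ β) some, ?_, ?_,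
    Set.nonempty_iff_ne_empty.1 ⟨none, ?_⟩⟩
  · rw [Interp.satT_ofValuation_iff hT]
    rintro (_ | a)
    exacts [h₀T, hβT a]
  · rintro (⟨D, a⟩ | ⟨r, a, b⟩) hx
    · exact (Interp.mem_sem_ofValuation_iff (hAb D a hx) _ _ (some a)).2 (hβAb D a hx)
    · trivial
  · exact (Interp.mem_sem_ofValuation_iff hC _ _ _).2 h₀C

end

/-- Per-individual decomposition of quantifier-free ontology satisfiability (operators
¬, ⊤, ⊥ only). -/
theorem stmt14 {A R Ind : Type} (T : Set (Concept A R × Concept A R))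
    (Ab : Set (Assertion A R Ind)) (C : Concept A R)
    (hT : ∀ ax ∈ T, ax.1.isProp {negOp, topOp, botOp} ∧ ax.2.isProp {negOp, topOp, botOp})
    (hAb : ∀ (D : Concept A R) (a : Ind),
        Assertion.conc D a ∈ Ab → D.isProp {negOp, topOp, botOp})
    (hC : C.isProp {negOp, topOp, botOp}) :
    (∃ I : Interp A R Ind, I.satT T ∧ I.satAB Ab ∧ I.sem C ≠ ∅) ↔
      ((∀ a : Ind, (∃ x ∈ Ab, x.mentions a) →
          ∃ I : Interp A R Ind,
            I.satT (T ∪ {ax | ∃ D : Concept A R,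
              Assertion.conc D a ∈ Ab ∧ ax = (Concept.top, D)}))
        ∧ ∃ I : Interp A R Ind, I.satT T ∧ I.sem C ≠ ∅) := by
  have hTa (a : Ind) := exists_satT_iff_exists_pSatT (R := R) (Ind := Ind)
    (isPropT_union_top hT (by simp) (hAb · a))
  simp only [hTa, pSatT_union_iff, pSatT_top_iff, exists_satT_and_sem_ne_empty_iff hT hC]
  constructor
  · rintro ⟨I, hIT, hIAb, hIC⟩
    refine ⟨fun a _ => ⟨I.valAt (I.ind a), (I.satT_iff_forall_pSatT hT).1 hIT _,
      fun D hD => I.pEval_valAt_of_satAB hIAb hD (hAb D a hD)⟩, ?_⟩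
    exact (exists_satT_and_sem_ne_empty_iff hT hC).1 ⟨I, hIT, hIC⟩
  · rintro ⟨hind, β₀, h₀T, h₀C⟩
    -- unmentioned individuals carry no assertions and may reuse the valuation witnessing `C`
    have hβ (a : Ind) :
        ∃ β, pSatT β T ∧ ∀ D, Assertion.conc D a ∈ Ab → D.pEval β = true := by
      by_cases ha : ∃ x ∈ Ab, x.mentions a
      · exact hind a ha
      · exact ⟨β₀, h₀T, fun D hD => (ha ⟨_, hD, rfl⟩).elim⟩
    choose β hβT hβAb using hβ
    exact exists_model_of_pSatT hT hAb hC h₀T h₀C hβT fun D a => hβAb a D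

end ALC
end
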